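/- Let k, a be positive integers and n a natural number. Then (k+1) times the total number of humps over all (k,a)-paths of order n equals |SP_n(k,a)| − δ_{a|n}, where δ_{a|n} = 1 if a divides n and 0 otherwise. -/

import Mathlib

/-- Steps for `(k,a)`-paths: up `U = (1,k)`, down `D = (1,-1)`, horizontal `H = (a,0)`. -/
inductive Step : Type
  | U : Step
  | D : Step
  | H : Step
  deriving DecidableEq

/-- The displacement of a single step. -/
def stepDisp (k a : ℕ) : Step → ℤ × ℤ
  | Step.U => (1, (k : ℤ))
  | Step.D => (1, -1)
  | Step.H => ((a : ℤ), 0)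

/-- The total displacement of a word of steps. -/
def pathDisp (k a : ℕ) (w : List Step) : ℤ × ℤ := (w.map (stepDisp k a)).sum

/-- A super `(k,a)`-path of order `n`: a step word with total displacement `(n,0)`. -/
def IsSuperPath (k a n : ℕ) (w : List Step) : Prop :=
  pathDisp k a w = ((n : ℤ), 0)

/-- A `(k,a)`-path of order `n`: a super path all of whose partial sums have
nonnegative `y`-coordinate. -/
def IsPath (k a n : ℕ) (w : List Step) : Prop :=
  IsSuperPath k a n w ∧ ∀ p : List Step, p <+: w → 0 ≤ (pathDisp k a p).2

/-- There is a hump (a factor `U H^j D` for some `j ≥ 0`) starting at position `i` of `w`. -/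
def IsHumpAt (w : List Step) (i : ℕ) : Prop :=
  ∃ j : ℕ, (Step.U :: (List.replicate j Step.H ++ [Step.D])) <+: w.drop i

/-!
Rotating `P ++ [D]` so that a chosen hump of the path `P` comes first turns hump-marked paths of
order `n` injectively into words of displacement `(n + 1, -1)` beginning with a hump `U H^j D`.
Conversely, by the cycle lemma such a word has exactly one rotation whose proper prefixes all stay
weakly above the axis; that rotation ends in `D`, and removing it gives the path. Sending
`U H^j D T` to `H^j U T` identifies these words with the super paths whose first non-`H` letter is
`U`. In the rearrangement class of a super path with `u ≥ 1` up steps, hence `k u` down steps, a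
rotation double count shows that this first letter is `U` for exactly a fraction
`u / (u + k u) = 1 / (k + 1)` of the words. The only super path without `U` is `H^(n/a)`, present
iff `a ∣ n`.
-/

open Finset
open scoped List

section Rearrangements

variable {α : Type*} [DecidableEq α]

def permClass (l : List α) : Finset (List α) := l.permutations.toFinset

@[simp] lemma mem_permClass {l w : List α} : w ∈ permClass l ↔ w ~ l := by
  simp [permClass]

lemma permClass_congr {l l' : List α} (h : l ~ l') : permClass l = permClass l' := by
  ext w
  simp only [mem_permClass]
  exact ⟨fun hw => hw.trans h, fun hw => hw.trans h.symm⟩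

lemma card_filter_getElem?_eq_count (w : List α) (c : α) :
    #{i ∈ range w.length | w[i]? = some c} = w.count c := by
  induction w with
  | nil => simp
  | cons x t ih =>
    rw [List.count_cons, ← ih, card_filter, card_filter, List.length_cons, sum_range_succ']
    simp only [List.getElem?_cons_succ, List.getElem?_cons_zero, Option.some.injEq, beq_iff_eq]

/-- Both sides count the pairs `(w, i)` with `(w.rotate i).head? = some c`. -/
lemma count_mul_card_permClass (l : List α) (c : α) :
    l.count c * #(permClass l) = l.length * #{w ∈ permClass l | w.head? = some c} := by
  have hpairs : #{wi ∈ permClass l ×ˢ range l.length | (wi.1.rotate wi.2).head? = some c}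
      = l.count c * #(permClass l) := by
    rw [card_filter, sum_product, mul_comm, ← smul_eq_mul, ← sum_const]
    refine sum_congr rfl fun w hw => ?_
    have hw := mem_permClass.1 hw
    rw [← card_filter, ← hw.count_eq, ← card_filter_getElem?_eq_count, hw.length_eq]
    refine congrArg card (filter_congr fun i hi => ?_)
    rw [List.head?_rotate (by rw [hw.length_eq]; exact mem_range.1 hi)]
  have hprod : l.length * #{w ∈ permClass l | w.head? = some c}
      = #({w ∈ permClass l | w.head? = some c} ×ˢ range l.length) := by
    rw [card_product, card_range, mul_comm]
  rw [← hpairs, hprod]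
  refine card_nbij' (fun wi => (wi.1.rotate wi.2, wi.2))
    (fun wi => (wi.1.rotate (l.length - wi.2), wi.2)) ?_ ?_ ?_ ?_
  all_goals
    rintro ⟨w, i⟩ hwi
    simp only [coe_filter, coe_product, Set.mem_prod, Set.mem_ofPred_eq, mem_coe, mem_product,
      mem_permClass, mem_range] at hwi ⊢
  · obtain ⟨⟨hw, hi⟩, hc⟩ := hwi
    exact ⟨⟨(List.rotate_perm w i).trans hw, hc⟩, hi⟩
  · obtain ⟨⟨hw, hc⟩, hi⟩ := hwi
    refine ⟨⟨(List.rotate_perm w _).trans hw, hi⟩, ?_⟩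
    rwa [List.rotate_rotate, Nat.sub_add_cancel hi.le, ← hw.length_eq, List.rotate_length]
  · rw [List.rotate_rotate, Nat.add_sub_cancel' hwi.1.2.le, ← hwi.1.1.length_eq,
      List.rotate_length]
  · rw [List.rotate_rotate, Nat.sub_add_cancel hwi.2.le, ← hwi.1.1.length_eq, List.rotate_length]

lemma card_permClass_cons_filter (c : α) (l : List α) (p : List α → Prop) [DecidablePred p] :
    #{w ∈ permClass (c :: l) | w.head? = some c ∧ p w} = #{w ∈ permClass l | p (c :: w)} := by
  have himage : {w ∈ permClass (c :: l) | w.head? = some c ∧ p w}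
      = {w ∈ permClass l | p (c :: w)}.image (c :: ·) := by
    ext w
    rcases w with _ | ⟨x, w⟩
    · simp
    · simp only [mem_filter, mem_permClass, List.head?_cons, Option.some.injEq, mem_image,
        List.cons.injEq]
      constructor
      · rintro ⟨hw, rfl, hp⟩
        exact ⟨w, ⟨(List.perm_cons x).1 hw, hp⟩, rfl, rfl⟩
      · rintro ⟨v, ⟨hv, hp⟩, rfl, rfl⟩
        exact ⟨(List.perm_cons c).2 hv, rfl, hp⟩
  rw [himage, card_image_of_injective _ List.cons_injective]

variable {c e : α}

lemma find?_ne_eq_head? {w : List α} (he : e ∉ w) : w.find? (· ≠ e) = w.head? := by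
  rcases w with _ | ⟨x, w⟩
  · rfl
  · have hx : x ≠ e := fun hx => he (hx ▸ List.mem_cons_self)
    simp [hx]

lemma card_permClass_cons_filter_find? (hce : c ≠ e) (l : List α) :
    #{w ∈ permClass (e :: l) | w.find? (· ≠ e) = some c}
      = #{w ∈ permClass (e :: l) | w.head? = some c}
        + #{w ∈ permClass l | w.find? (· ≠ e) = some c} := by
  have hfind : ∀ w : List α, w.find? (· ≠ e) = some c
      ↔ w.head? = some c ∨ (w.head? = some e ∧ w.find? (· ≠ e) = some c) := by
    rintro (_ | ⟨x, w⟩)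
    · simp
    · by_cases hx : x = e
      · subst hx
        simp [hce.symm]
      · simp [hx]
  rw [filter_congr fun w _ => hfind w, filter_or, card_union_of_disjoint,
    card_permClass_cons_filter]
  · simp
  · exact disjoint_filter.2 fun w _ hc he => hce (Option.some.inj (hc.symm.trans he.1))

lemma count_mul_card_permClass_find? (hce : c ≠ e) (l : List α) :
    l.count c * #(permClass l)
      = (l.length - l.count e) * #{w ∈ permClass l | w.find? (· ≠ e) = some c} := by
  induction hl : l.count e generalizing l with
  | zero =>
    have he : e ∉ l := List.count_eq_zero.1 hl
    rw [Nat.sub_zero, count_mul_card_permClass]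
    congr 2
    refine filter_congr fun w hw => ?_
    rw [find?_ne_eq_head? fun h => he ((mem_permClass.1 hw).subset h)]
  | succ h ih =>
    have hperm : l ~ e :: l.erase e := List.perm_cons_erase (List.count_pos_iff.1 (by omega))
    set l' := l.erase e
    have hcount : l'.count e = h := by simpa [hperm.count_eq, List.count_cons] using hl
    obtain ⟨M, hM⟩ : ∃ M, l'.length = M + h :=
      ⟨l'.length - h, by have := List.count_le_length (a := e) (l := l'); omega⟩
    have hIH := ih l' hcount
    have hrot_c := count_mul_card_permClass (e :: l') c
    have hrot_e := count_mul_card_permClass (e :: l') e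
    rw [show #{w ∈ permClass (e :: l') | w.head? = some e} = #(permClass l') by
      simpa using card_permClass_cons_filter e l' fun _ => True] at hrot_e
    rw [hperm.count_eq, hperm.length_eq, permClass_congr hperm,
      card_permClass_cons_filter_find? hce]
    simp only [List.count_cons_self, List.count_cons, hcount, hM, List.length_cons, beq_iff_eq,
      hce.symm, if_false, add_zero, Nat.add_sub_cancel] at hrot_c hrot_e hIH ⊢
    rw [show M + h + 1 - (h + 1) = M by omega]
    apply Nat.eq_of_mul_eq_mul_left (by omega : 0 < M + h + 1)
    linear_combination M * hrot_c + l'.count c * hrot_e + (M + h + 1) * hIH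

lemma mul_card_filter_eq_of_permClass {S : Finset (List α)} (hS : ∀ w ∈ S, ∀ v, v ~ w → v ∈ S)
    (r : ℕ) {p q : List α → Prop} [DecidablePred p] [DecidablePred q]
    (h : ∀ w ∈ S, r * #{v ∈ permClass w | p v} = #{v ∈ permClass w | q v}) :
    r * #{w ∈ S | p w} = #{w ∈ S | q w} := by
  have hfiber : ∀ (p : List α → Prop) [DecidablePred p], ∀ w ∈ S,
      filter (fun v : List α => (v : Multiset α) = w) {v ∈ S | p v} = {v ∈ permClass w | p v} := by
    intro p _ w hw
    ext v
    simp only [mem_filter, mem_permClass, Multiset.coe_eq_coe]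
    exact ⟨fun hv => ⟨hv.2, hv.1.2⟩, fun hv => ⟨⟨hS w hw v hv.1, hv.2⟩, hv.1⟩⟩
  have hmaps : ∀ (p : List α → Prop) [DecidablePred p],
      Set.MapsTo (fun v : List α => (v : Multiset α)) ({v ∈ S | p v} : Finset (List α))
        (S.image fun v : List α => (v : Multiset α)) :=
    fun _ _ v hv => mem_image_of_mem _ (mem_filter.1 (mem_coe.1 hv)).1
  rw [card_eq_sum_card_fiberwise (hmaps p), card_eq_sum_card_fiberwise (hmaps q), mul_sum]
  refine sum_congr rfl fun m hm => ?_
  obtain ⟨w, hw, rfl⟩ := mem_image.1 hm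
  rw [hfiber p w hw, hfiber q w hw, h w hw]

lemma find?_ne_eq_some_iff (hce : c ≠ e) {w : List α} :
    w.find? (· ≠ e) = some c ↔ ∃ j T, w = List.replicate j e ++ c :: T := by
  rw [List.find?_eq_some_iff_append]
  simp only [hce, ne_eq, not_false_eq_true, decide_true, true_and, decide_not, Bool.not_not,
    decide_eq_true_eq]
  constructor
  · rintro ⟨as, T, rfl, has⟩
    exact ⟨as.length, T, by rw [← List.eq_replicate_iff.2 ⟨rfl, has⟩]⟩
  · rintro ⟨j, T, rfl⟩
    exact ⟨_, T, rfl, fun b hb => (List.mem_replicate.1 hb).2⟩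

lemma replicate_append_cons_injective (hce : c ≠ e) :
    Function.Injective fun jT : ℕ × List α => List.replicate jT.1 e ++ c :: jT.2 := by
  rintro ⟨j, T⟩ ⟨j', T'⟩ h
  have hidx : ∀ j (T : List α), (List.replicate j e ++ c :: T).idxOf c = j := fun j T => by
    rw [List.idxOf_append_of_notMem (by simp [hce]), List.idxOf_cons_self, List.length_replicate,
      add_zero]
  obtain rfl : j = j' := by simpa [hidx] using congrArg (List.idxOf c) h
  simpa using h

end Rearrangements

section CycleLemma

def IsBallot (x : List ℤ) : Prop := ∀ i < x.length, 0 ≤ (x.take i).sum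

variable {x : List ℤ} {r i : ℕ}

lemma sum_take_rotate_of_le (hr : r ≤ x.length) (hi : i ≤ x.length - r) :
    ((x.rotate r).take i).sum = (x.take (r + i)).sum - (x.take r).sum := by
  rw [List.rotate_eq_drop_append_take hr, List.take_append_of_le_length (by simpa using hi),
    List.take_add, List.sum_append]
  ring

lemma sum_take_rotate_of_ge (hr : r ≤ x.length) (hi : x.length - r ≤ i) (hi' : i ≤ x.length) :
    ((x.rotate r).take i).sum = x.sum - (x.take r).sum + (x.take (i - (x.length - r))).sum := by
  rw [List.rotate_eq_drop_append_take hr, List.take_append,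
    List.take_of_length_le (by simpa using hi), List.take_take, List.length_drop,
    min_eq_left (by omega), List.sum_append, ← List.sum_take_add_sum_drop x r]
  ring

/-- The lexicographic condition says that `r` is the first place where the prefix sums of `x`
attain their minimum. -/
lemma isBallot_rotate_iff (hx : x.sum = -1) (hr : r < x.length) :
    IsBallot (x.rotate r) ↔
      ∀ q < x.length, toLex ((x.take r).sum, r) ≤ toLex ((x.take q).sum, q) := by
  simp only [Prod.Lex.toLex_le_toLex]
  constructor
  · intro hb q hq
    rcases le_or_gt r q with hrq | hqr
    · have := hb (q - r) (by rw [List.length_rotate]; omega)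
      rw [sum_take_rotate_of_le hr.le (by omega), Nat.add_sub_cancel' hrq] at this
      omega
    · have := hb (x.length - r + q) (by rw [List.length_rotate]; omega)
      rw [sum_take_rotate_of_ge hr.le (by omega) (by omega), Nat.add_sub_cancel_left, hx] at this
      omega
  · intro hmin i hi
    rw [List.length_rotate] at hi
    rcases le_or_gt i (x.length - r) with hle | hgt
    · rw [sum_take_rotate_of_le hr.le hle]
      rcases (show r + i ≤ x.length by omega).lt_or_eq with hlt | heq
      · have := hmin (r + i) hlt
        omega
      · have := hmin 0 (by omega)
        rw [heq, List.take_length, hx]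
        simp only [List.take_zero, List.sum_nil] at this
        omega
    · rw [sum_take_rotate_of_ge hr.le hgt.le hi.le, hx]
      have := hmin (i - (x.length - r)) (by omega)
      omega

/-- Raney's cycle lemma. -/
theorem existsUnique_isBallot_rotate (hx : x.sum = -1) :
    ∃! r, r < x.length ∧ IsBallot (x.rotate r) := by
  have hlen : 0 < x.length := List.length_pos_iff.2 (by rintro rfl; simp at hx)
  obtain ⟨r, hr, hmin⟩ := exists_min_image (range x.length)
    (fun q => toLex ((x.take q).sum, q)) ⟨0, mem_range.2 hlen⟩
  refine ⟨r, ⟨mem_range.1 hr, (isBallot_rotate_iff hx (mem_range.1 hr)).2 fun q hq =>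
    hmin q (mem_range.2 hq)⟩, fun r' ⟨hr', hb'⟩ => ?_⟩
  have h₁ := (isBallot_rotate_iff hx hr').1 hb' r (mem_range.1 hr)
  have h₂ := hmin r' (mem_range.2 hr')
  exact congrArg (fun p => (ofLex p).2) (le_antisymm h₁ h₂)

end CycleLemma

instance : Fintype Step := ⟨{.U, .D, .H}, fun s => by cases s <;> simp⟩

def height (k : ℕ) : Step → ℤ
  | .U => k
  | .D => -1
  | .H => 0

section SuperPaths

variable {k a n : ℕ}

@[simp] lemma pathDisp_nil : pathDisp k a [] = 0 := rfl

@[simp] lemma pathDisp_cons (s : Step) (w : List Step) :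
    pathDisp k a (s :: w) = stepDisp k a s + pathDisp k a w := List.sum_cons

@[simp] lemma pathDisp_append (v w : List Step) :
    pathDisp k a (v ++ w) = pathDisp k a v + pathDisp k a w := by
  simp [pathDisp]

lemma pathDisp_perm {v w : List Step} (h : v ~ w) : pathDisp k a v = pathDisp k a w :=
  (h.map _).sum_eq

lemma snd_pathDisp (w : List Step) : (pathDisp k a w).2 = (w.map (height k)).sum := by
  induction w with
  | nil => rfl
  | cons s w ih => cases s <;> simp [ih, stepDisp, height]

lemma pathDisp_eq_counts (w : List Step) :
    pathDisp k a w = ((w.count .U + w.count .D + a * w.count .H : ℤ),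
      (k : ℤ) * w.count .U - w.count .D) := by
  induction w with
  | nil => rfl
  | cons s w ih => rw [pathDisp_cons, ih]; cases s <;> ext <;> simp [stepDisp] <;> ring

lemma length_eq_counts (w : List Step) : w.length = w.count .U + w.count .D + w.count .H := by
  induction w with
  | nil => rfl
  | cons s w ih => cases s <;> simp [ih] <;> ring

lemma isSuperPath_iff_counts {w : List Step} :
    IsSuperPath k a n w ↔
      w.count .U + w.count .D + a * w.count .H = n ∧ w.count .D = k * w.count .U := by
  rw [IsSuperPath, pathDisp_eq_counts, Prod.mk.injEq]
  constructor <;> rintro ⟨h₁, h₂⟩ <;> constructor <;> linarith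

lemma finite_setOf_isSuperPath (ha : 0 < a) : {w | IsSuperPath k a n w}.Finite := by
  refine (List.finite_length_le Step n).subset fun w hw => ?_
  have := (isSuperPath_iff_counts.1 hw).1
  have := length_eq_counts w
  simp only [Set.mem_ofPred_eq]
  nlinarith

lemma isSuperPath_iff_eq_replicate_of_notMem (ha : 0 < a) {w : List Step} (hU : .U ∉ w) :
    IsSuperPath k a n w ↔ a ∣ n ∧ w = List.replicate (n / a) .H := by
  rw [isSuperPath_iff_counts, List.count_eq_zero.2 hU, mul_zero]
  constructor
  · rintro ⟨hn, hD⟩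
    have hH : ∀ s ∈ w, s = .H := by
      rintro (_ | _ | _) hs
      · exact absurd hs hU
      · exact absurd (List.count_pos_iff.2 hs) (by omega)
      · rfl
    have hlen : w.length = w.count .H := by
      rw [length_eq_counts, List.count_eq_zero.2 hU, hD, zero_add, zero_add]
    rw [hD, zero_add, zero_add] at hn
    refine ⟨⟨_, hn.symm⟩, List.eq_replicate_iff.2 ⟨?_, hH⟩⟩
    rw [hlen, ← hn, Nat.mul_div_cancel_left _ ha]
  · rintro ⟨⟨q, rfl⟩, rfl⟩
    simp [List.count_replicate, ha.ne']

lemma IsSuperPath.mul_card_permClass_find? {w : List Step} (hw : IsSuperPath k a n w) :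
    (k + 1) * #{v ∈ permClass w | v.find? (· ≠ .H) = some .U}
      = #{v ∈ permClass w | .U ∈ v} := by
  by_cases hU : .U ∈ w
  · rw [filter_true_of_mem fun v hv => (mem_permClass.1 hv).mem_iff.2 hU]
    have hclass := count_mul_card_permClass_find? (by decide : Step.U ≠ .H) w
    have hlen : w.length - w.count .H = (k + 1) * w.count .U := by
      rw [length_eq_counts, (isSuperPath_iff_counts.1 hw).2]
      ring_nf
      omega
    rw [hlen, mul_assoc, mul_comm (w.count .U)] at hclass
    exact Nat.eq_of_mul_eq_mul_right (List.count_pos_iff.2 hU) (by rw [hclass]; ring)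
  · have hU' : ∀ v ∈ permClass w, .U ∉ v := fun v hv h => hU ((mem_permClass.1 hv).mem_iff.1 h)
    rw [filter_false_of_mem hU',
      filter_false_of_mem fun v hv h => hU' v hv (List.mem_of_find?_eq_some h)]
    rfl

theorem mul_ncard_superPaths_find? (ha : 0 < a) :
    (k + 1) * {w | IsSuperPath k a n w ∧ w.find? (· ≠ .H) = some .U}.ncard
      = {w | IsSuperPath k a n w}.ncard - if a ∣ n then 1 else 0 := by
  have hfin := finite_setOf_isSuperPath (k := k) (n := n) ha
  set S := hfin.toFinset
  have hS : ∀ w ∈ S, ∀ v, v ~ w → v ∈ S := by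
    intro w hw v hv
    simpa [S, IsSuperPath, pathDisp_perm hv] using hw
  have hnoU : #{w ∈ S | .U ∉ w} = if a ∣ n then 1 else 0 := by
    split_ifs with hdvd
    · rw [card_eq_one]
      refine ⟨List.replicate (n / a) .H, ?_⟩
      ext w
      simp only [mem_filter, Set.Finite.mem_toFinset, Set.mem_ofPred_eq, mem_singleton, S]
      constructor
      · rintro ⟨hw, hU⟩
        exact ((isSuperPath_iff_eq_replicate_of_notMem ha hU).1 hw).2
      · rintro rfl
        have hU : .U ∉ List.replicate (n / a) Step.H := by simp
        exact ⟨(isSuperPath_iff_eq_replicate_of_notMem ha hU).2 ⟨hdvd, rfl⟩, hU⟩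
    · rw [card_eq_zero, filter_eq_empty_iff]
      intro w hw hU
      exact hdvd ((isSuperPath_iff_eq_replicate_of_notMem ha hU).1 (by simpa [S] using hw)).1
  have hsplit := card_filter_add_card_filter_not (s := S) fun w => .U ∈ w
  have hcoe : {w | IsSuperPath k a n w ∧ w.find? (· ≠ .H) = some .U}
      = ↑({w ∈ S | w.find? (· ≠ .H) = some .U} : Finset (List Step)) := by
    ext w
    simp [S]
  have hSP : {w | IsSuperPath k a n w}.ncard = #S := Set.ncard_eq_toFinset_card _ hfin
  rw [hcoe, Set.ncard_coe_finset, hSP, mul_card_filter_eq_of_permClass hS (k + 1) fun w hw =>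
    IsSuperPath.mul_card_permClass_find? (by simpa [S] using hw)]
  omega

end SuperPaths

def hump (j : ℕ) : List Step := .U :: (List.replicate j .H ++ [Step.D])

@[simp] lemma length_hump (j : ℕ) : (hump j).length = j + 2 := by
  simp [hump]

section Humps

variable {k a n : ℕ}

lemma isBallot_map_append_D_iff {P : List Step} :
    IsBallot ((P ++ [Step.D]).map (height k)) ↔ ∀ p, p <+: P → 0 ≤ (pathDisp k a p).2 := by
  simp only [IsBallot, List.length_map, List.length_append, List.length_singleton,
    ← List.map_take, snd_pathDisp]
  constructor
  · intro hb p hp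
    have := hb p.length (by have := hp.length_le; omega)
    rwa [List.take_append_of_le_length hp.length_le, ← List.prefix_iff_eq_take.1 hp] at this
  · intro hp i hi
    rw [List.take_append_of_le_length (by omega)]
    exact hp _ (List.take_prefix i P)

lemma isPath_iff_isBallot {P : List Step} :
    IsPath k a n P ↔ pathDisp k a (P ++ [Step.D]) = ((n : ℤ) + 1, -1) ∧
      IsBallot ((P ++ [Step.D]).map (height k)) := by
  rw [IsPath, isBallot_map_append_D_iff, IsSuperPath, pathDisp_append]
  simp only [pathDisp_cons, pathDisp_nil, add_zero, stepDisp, Prod.ext_iff, Prod.fst_add,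
    Prod.snd_add]
  constructor
  · rintro ⟨⟨h₁, h₂⟩, hp⟩
    exact ⟨⟨by rw [h₁], by rw [h₂]; rfl⟩, hp⟩
  · rintro ⟨⟨h₁, h₂⟩, hp⟩
    exact ⟨⟨by linarith, by linarith⟩, hp⟩

lemma dropLast_append_D_of_isBallot {W : List Step} (hb : IsBallot (W.map (height k)))
    (hsum : (W.map (height k)).sum = -1) : W.dropLast ++ [Step.D] = W := by
  have hne : W ≠ [] := by rintro rfl; simp at hsum
  have hpre := hb (W.length - 1) (by
    simp only [List.length_map]; have := List.length_pos_iff.2 hne; omega)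
  rw [← List.map_take, ← List.dropLast_eq_take] at hpre
  rw [← List.dropLast_append_getLast hne, List.map_append, List.sum_append] at hsum
  conv_rhs => rw [← List.dropLast_append_getLast hne]
  cases h : W.getLast hne with
  | D => rfl
  | U | H =>
    rw [h] at hsum
    simp only [List.map_cons, List.map_nil, List.sum_cons, List.sum_nil, height, add_zero] at hsum
    omega

lemma pathDisp_hump_append (j : ℕ) (T : List Step) :
    pathDisp k a (hump j ++ T)
      = pathDisp k a (List.replicate j .H ++ .U :: T) + stepDisp k a .D := by
  simp only [hump, List.cons_append, List.append_assoc, pathDisp_cons, pathDisp_append,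
    pathDisp_nil, zero_add]
  abel

lemma hump_append_injective :
    Function.Injective fun jT : ℕ × List Step => hump jT.1 ++ jT.2 := by
  intro jT jT' h
  apply replicate_append_cons_injective (by decide : Step.D ≠ .H)
  simpa [hump] using h

lemma IsHumpAt.lt_length {P : List Step} {m : ℕ} (h : IsHumpAt P m) : m < P.length := by
  obtain ⟨j, hj⟩ := h
  by_contra hm
  simp [List.drop_eq_nil_of_le (not_lt.1 hm)] at hj

lemma sum_map_height_take_nonneg_of_hump_prefix (hk : 0 < k) {S : List Step} {j i : ℕ}
    (hS : hump j <+: S) (hi : i ≤ j + 2) : 0 ≤ ((S.take i).map (height k)).sum := by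
  obtain ⟨T, rfl⟩ := hS
  rw [List.take_append_of_le_length ((length_hump j).trans_ge hi)]
  rcases i with _ | i
  · simp
  · simp only [hump, List.take_succ_cons, List.take_append, List.take_replicate, List.map_cons,
      List.map_append, List.map_replicate, List.sum_cons, List.sum_append, List.sum_replicate,
      List.length_replicate, height, smul_zero, zero_add]
    generalize i - j = m
    cases m
    · simp
    · simp only [List.take_succ_cons, List.take_nil, List.map_cons, List.map_nil, List.sum_cons,
        List.sum_nil, height]
      omega

/-- The prefix sums of `S` are nonnegative along its leading hump, so the rotation point `r` is
`0` or lies beyond the hump; either way the hump is not cut by dropping the final letter. -/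
lemma isHumpAt_dropLast_rotate (hk : 0 < k) {S : List Step} {j r : ℕ} (hS : hump j <+: S)
    (hsum : (S.map (height k)).sum = -1) (hr : r < S.length)
    (hb : IsBallot ((S.map (height k)).rotate r)) :
    IsHumpAt (S.rotate r).dropLast ((S.length - r) % S.length) := by
  have hpre := fun i => sum_map_height_take_nonneg_of_hump_prefix hk (i := i) hS
  suffices ∃ i, j + 2 ≤ i ∧ ((S.rotate r).dropLast.drop ((S.length - r) % S.length)) = S.take i by
    obtain ⟨i, hi, hdrop⟩ := this
    exact ⟨j, hdrop ▸ List.prefix_take_iff.2 ⟨hS, (length_hump j).trans_le hi⟩⟩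
  rcases Nat.eq_zero_or_pos r with rfl | hr0
  · refine ⟨S.length - 1, ?_, by simp [List.dropLast_eq_take]⟩
    by_contra! hlen
    have := hpre S.length (by omega)
    rw [List.take_length, hsum] at this
    omega
  · have hmin := (isBallot_rotate_iff hsum (by simpa using hr)).1 hb 0
      (by rw [List.length_map]; omega)
    simp only [Prod.Lex.toLex_le_toLex, ← List.map_take, List.take_zero, List.map_nil,
      List.sum_nil] at hmin
    refine ⟨r - 1, ?_, ?_⟩
    · by_contra! hrj
      have := hpre r (by omega)
      omega
    · rw [Nat.mod_eq_of_lt (by omega), List.rotate_eq_drop_append_take hr.le,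
        List.dropLast_append_of_ne_nil (List.ne_nil_of_length_pos (by rw [List.length_take]; omega)),
        List.drop_left' (by simp), List.dropLast_take (by omega)]

lemma exists_isPath_rotate_eq (hk : 0 < k) {j : ℕ} {T : List Step}
    (hS : pathDisp k a (hump j ++ T) = ((n : ℤ) + 1, -1)) :
    ∃ P m, (IsPath k a n P ∧ IsHumpAt P m) ∧ (P ++ [Step.D]).rotate m = hump j ++ T := by
  set S := hump j ++ T
  have hsum : (S.map (height k)).sum = -1 := by rw [← snd_pathDisp (a := a), hS]
  obtain ⟨r, ⟨hr, hb⟩, -⟩ := existsUnique_isBallot_rotate hsum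
  rw [List.length_map] at hr
  set W := S.rotate r
  have hbW : IsBallot (W.map (height k)) := by rwa [List.map_rotate]
  have hW : W.dropLast ++ [Step.D] = W :=
    dropLast_append_D_of_isBallot hbW (by rw [(List.rotate_perm _ _).map _ |>.sum_eq, hsum])
  refine ⟨W.dropLast, (S.length - r) % S.length,
    ⟨?_, isHumpAt_dropLast_rotate hk (List.prefix_append _ _) hsum hr hb⟩, ?_⟩
  · refine isPath_iff_isBallot.2 ⟨?_, by rwa [hW]⟩
    rw [hW, pathDisp_perm (List.rotate_perm _ _), hS]
  · have hmod := List.rotate_mod W (S.length - r)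
    rw [List.length_rotate] at hmod
    rw [hW, hmod, List.rotate_rotate, Nat.add_sub_cancel' hr.le, List.rotate_length]

lemma injOn_rotate_append_D :
    Set.InjOn (fun Pm : List Step × ℕ => (Pm.1 ++ [Step.D]).rotate Pm.2)
      {Pm | IsPath k a n Pm.1 ∧ IsHumpAt Pm.1 Pm.2} := by
  rintro ⟨P₁, m₁⟩ ⟨hP₁, hm₁⟩ ⟨P₂, m₂⟩ ⟨hP₂, hm₂⟩ heq
  dsimp only at hP₁ hm₁ hP₂ hm₂ heq
  obtain ⟨hdisp, hb₁⟩ := isPath_iff_isBallot.1 hP₁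
  have hb₂ := (isPath_iff_isBallot.1 hP₂).2
  have hsum : ((P₁ ++ [Step.D]).map (height k)).sum = -1 := by rw [← snd_pathDisp, hdisp]
  have hlen : (P₂ ++ [Step.D]).length = (P₁ ++ [Step.D]).length := by
    simpa using congrArg List.length heq.symm
  set L := (P₁ ++ [Step.D]).length
  have hm₁L : m₁ < L := by
    have := hm₁.lt_length
    simp only [L, List.length_append, List.length_singleton]
    omega
  have hm₂L : m₂ < L := by have := hm₂.lt_length; simp only [List.length_append] at hlen; omega
  have hrot : P₂ ++ [Step.D] = (P₁ ++ [Step.D]).rotate ((m₁ + (L - m₂)) % L) := by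
    rw [List.rotate_mod, ← List.rotate_rotate, heq, List.rotate_rotate,
      Nat.add_sub_cancel' hm₂L.le, ← hlen, List.rotate_length]
  have hmod : 0 = (m₁ + (L - m₂)) % L :=
    (existsUnique_isBallot_rotate hsum).unique ⟨by simp, by simpa using hb₁⟩
      ⟨by rw [List.length_map]; exact Nat.mod_lt _ (by omega),
        by rwa [← List.map_rotate, ← hrot]⟩
  obtain rfl : m₁ = m₂ := by
    have h : (m₁ + L) % L = m₂ % L := by
      rw [show m₁ + L = m₁ + (L - m₂) + m₂ by omega, Nat.add_mod, ← hmod, zero_add, Nat.mod_mod]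
    rwa [Nat.add_mod_right, Nat.mod_eq_of_lt hm₁L, Nat.mod_eq_of_lt hm₂L] at h
  rw [List.rotate_eq_rotate, List.append_cancel_right_eq] at heq
  rw [heq]

lemma image_rotate_append_D (hk : 0 < k) :
    (fun Pm : List Step × ℕ => (Pm.1 ++ [Step.D]).rotate Pm.2) ''
        {Pm | IsPath k a n Pm.1 ∧ IsHumpAt Pm.1 Pm.2}
      = (fun jT : ℕ × List Step => hump jT.1 ++ jT.2) ''
        {jT | IsSuperPath k a n (List.replicate jT.1 .H ++ .U :: jT.2)} := by
  ext S
  simp only [Set.mem_image, Set.mem_ofPred_eq, Prod.exists]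
  constructor
  · rintro ⟨P, m, ⟨hP, j, R, hR⟩, rfl⟩
    have hm := (show IsHumpAt P m from ⟨j, R, hR⟩).lt_length
    have hrot : (P ++ [Step.D]).rotate m = hump j ++ (R ++ [Step.D] ++ P.take m) := by
      rw [List.rotate_eq_drop_append_take (by rw [List.length_append]; omega),
        List.drop_append_of_le_length hm.le,
        List.take_append_of_le_length hm.le, ← hR]
      simp [hump]
    refine ⟨j, R ++ [Step.D] ++ P.take m, ?_, hrot.symm⟩
    have h := pathDisp_perm (k := k) (a := a) (List.rotate_perm (P ++ [Step.D]) m)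
    rw [hrot, pathDisp_hump_append, (isPath_iff_isBallot.1 hP).1] at h
    rw [IsSuperPath, ← add_right_cancel_iff (a := stepDisp k a .D), h]
    simp [stepDisp]
  · rintro ⟨j, T, hT, rfl⟩
    refine exists_isPath_rotate_eq hk ?_
    rw [pathDisp_hump_append, hT]
    simp [stepDisp]

theorem ncard_humps_eq_ncard_superPaths_find? (hk : 0 < k) :
    {Pm : List Step × ℕ | IsPath k a n Pm.1 ∧ IsHumpAt Pm.1 Pm.2}.ncard
      = {w | IsSuperPath k a n w ∧ w.find? (· ≠ .H) = some .U}.ncard := by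
  rw [← injOn_rotate_append_D.ncard_image, image_rotate_append_D hk,
    Set.ncard_image_of_injective _ hump_append_injective,
    ← Set.ncard_image_of_injective _ (replicate_append_cons_injective (by decide : Step.U ≠ .H))]
  congr 1
  ext w
  simp only [Set.mem_image, Set.mem_ofPred_eq, Prod.exists,
    find?_ne_eq_some_iff (by decide : Step.U ≠ .H)]
  constructor
  · rintro ⟨j, T, hw, rfl⟩
    exact ⟨hw, j, T, rfl⟩
  · rintro ⟨hw, j, T, rfl⟩
    exact ⟨j, T, hw, rfl⟩

end Humps

/-- `(k+1)` times the total number of humps over all `(k,a)`-paths of order `n`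
equals `|SP_n(k,a)| − δ_{a∣n}`. -/
theorem stmt2 (k a n : ℕ) (hk : 0 < k) (ha : 0 < a) :
    (k + 1) * {Lp : List Step × ℕ | IsPath k a n Lp.1 ∧ IsHumpAt Lp.1 Lp.2}.ncard =
      {w : List Step | IsSuperPath k a n w}.ncard - (if a ∣ n then 1 else 0) := by
  rw [ncard_humps_eq_ncard_superPaths_find? hk, mul_ncard_superPaths_find? ha]
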